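/- arXiv:2507.08186 — 2 statements merged into one kernel-verified Lean document; each statement's English description precedes it below -/
import Mathlib

section
/- Let (X,μ,T,α) be a Gibbs–Markov map with full branches, G a countable discrete group, and ψ:X→G constant on each element of α. Fix g∈G, assume condition (D) holds at g, and assume μ^n(g):=μ({x:ψ_n(x)=g})>0 for all sufficiently large n. For u∈α_k and such n, define m_n^g(u) = (1/μ^n(g)) · ∑_{a∈α_n, a⊆u, ψ_n(a)=g} μ(a). Then m_n^g(u) → μ(u) as n→∞, for every k∈ℕ and every u∈α_k. -/
open MeasureTheory Filter Topology Set
open scoped ENNReal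

noncomputable section

/-- The cocycle `ψ_n(x) = ψ(T^{n-1} x) ⋯ ψ(T x) · ψ(x)` driven by `T`. -/
def cocycle {X G : Type*} [Monoid G] (T : X → X) (ψ : X → G) : ℕ → X → G
  | 0, _ => 1
  | n + 1, x => ψ (T^[n] x) * cocycle T ψ n x

/-- The collection `α_n` of (nonempty) `n`-cylinders `⋂_{j<n} T^{-j} a_j`, `a_j ∈ α`. -/
def cylinders {X : Type*} (T : X → X) (α : Set (Set X)) (n : ℕ) : Set (Set X) :=
  {c | c.Nonempty ∧ ∃ a : Fin n → Set X, (∀ j, a j ∈ α) ∧ c = ⋂ j : Fin n, T^[(j : ℕ)] ⁻¹' a j}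

/-- Birkhoff (ergodic) sums `φ_n = ∑_{j<n} φ ∘ T^j`. -/
def birkhoff {X : Type*} (T : X → X) (φ : X → ℝ) (n : ℕ) (x : X) : ℝ :=
  ∑ j ∈ Finset.range n, φ (T^[j] x)

/-- A Gibbs–Markov map with full branches: `μ` a Borel probability measure, `T`
measure-preserving, ergodic and topologically mixing, Markov with full branches for the
countable partition `α`, with big images, and a potential `φ` (the log Jacobian
`log dμ/d(μ∘T)`) that is locally Hölder (w.r.t. the separation metric, expressed through
cylinders) and has the Gibbs property. -/
structure IsGibbsMarkov {X : Type*} [MetricSpace X] [MeasurableSpace X]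
    (μ : Measure X) (T : X → X) (α : Set (Set X)) (φ : X → ℝ) : Prop where
  prob : IsProbabilityMeasure μ
  measurable_T : Measurable T
  measurePreserving : MeasurePreserving T μ μ
  ergodic : Ergodic T μ
  topMixing : ∀ U V : Set X, IsOpen U → IsOpen V → U.Nonempty → V.Nonempty →
    ∃ N, ∀ n ≥ N, (U ∩ T^[n] ⁻¹' V).Nonempty
  countable : α.Countable
  measurableSet : ∀ a ∈ α, MeasurableSet a
  nonempty : ∀ a ∈ α, a.Nonempty
  pairwiseDisjoint : α.PairwiseDisjoint id
  cover : ⋃₀ α = univ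
  fullBranches : ∀ a ∈ α, Set.BijOn T a univ
  bigImages : ∃ c : ℝ≥0∞, 0 < c ∧ ∀ a ∈ α, c ≤ μ (T '' a)
  holder : ∃ C > (0 : ℝ), ∃ β ∈ Set.Ioo (0 : ℝ) 1, ∀ n, ∀ c ∈ cylinders T α n,
    ∀ x ∈ c, ∀ y ∈ c, |φ x - φ y| ≤ C * β ^ n
  gibbs : ∃ C > (0 : ℝ), ∀ n : ℕ, ∀ c ∈ cylinders T α (n + 1), ∀ x ∈ c,
    (μ c).toReal / C ≤ Real.exp (birkhoff T φ (n + 1) x) ∧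
    Real.exp (birkhoff T φ (n + 1) x) ≤ C * (μ c).toReal

/-- Condition (D) at `g ∈ G`. -/
def CondD {X G : Type*} [MeasurableSpace X] [Group G]
    (μ : Measure X) (T : X → X) (α : Set (Set X)) (ψ : X → G) (g : G) : Prop :=
  ∀ ε > (0 : ℝ), ∀ n₀ : ℕ, ∃ n₁ > n₀, ∀ n ≥ n₁, ∃ n' ∈ Set.Icc n₀ n₁,
    ∀ b ∈ cylinders T α n',
      (μ {x | cocycle T ψ n x = g}).toReal / (1 + ε) ≤
          (μ (b ∩ {x | cocycle T ψ n x = g})).toReal / (μ b).toReal ∧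
      (μ (b ∩ {x | cocycle T ψ n x = g})).toReal / (μ b).toReal ≤
          (1 + ε) * (μ {x | cocycle T ψ n x = g}).toReal

/-- The mass `m_n^g(u) = (1/μ^n(g)) ∑_{a ∈ α_n, a ⊆ u, ψ_n(a) = g} μ(a)`. -/
def mng {X G : Type*} [MeasurableSpace X] [Group G]
    (μ : Measure X) (T : X → X) (α : Set (Set X)) (ψ : X → G)
    (g : G) (n : ℕ) (u : Set X) : ℝ :=
  (∑' a : {a : Set X // a ∈ cylinders T α n ∧ a ⊆ u ∧ ∀ x ∈ a, cocycle T ψ n x = g},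
      μ (a : Set X)).toReal / (μ {x | cocycle T ψ n x = g}).toReal

/-!
Write `S_n = {ψ_n = g}`. Since `ψ_n` is constant on `n`-cylinders and these refine `u`,
`m_n^g(u) = μ(u ∩ S_n) / μ(S_n)`. For large `n`, condition (D) provides a level `n' ≥ k` at which
`μ(b ∩ S_n)` lies within a factor `1 + ε` of `μ(b) μ(S_n)` for every `n'`-cylinder `b`. As `u` is a
countable disjoint union of such `b`, summing gives the same bound for `u`, so `m_n^g(u)` lies
between `μ(u) / (1 + ε)` and `(1 + ε) μ(u)`.
-/

theorem tendsto_of_forall_eventually_div_le_le_mul {ι : Type*} {l : Filter ι} {f : ι → ℝ}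
    {c : ℝ} (hc : 0 ≤ c)
    (h : ∀ ε > (0 : ℝ), ∀ᶠ i in l, c / (1 + ε) ≤ f i ∧ f i ≤ (1 + ε) * c) :
    Tendsto f l (𝓝 c) := by
  refine Metric.tendsto_nhds.mpr fun δ hδ => ?_
  set ε := δ / (c + 1) with hε_def
  have hε : 0 < ε := by positivity
  have hεc : ε * c < δ := by
    rw [hε_def, div_mul_eq_mul_div, div_lt_iff₀ (by linarith)]
    nlinarith
  filter_upwards [h ε hε] with i ⟨hlower, hupper⟩
  have hlower' : c - ε * c ≤ f i := by
    refine le_trans ?_ hlower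
    rw [le_div_iff₀ (by linarith)]
    nlinarith [mul_nonneg hε.le hc]
  rw [Real.dist_eq, abs_sub_lt_iff]
  constructor <;> nlinarith

theorem le_mul_of_div_le_of_le {a b c : ℝ} (ha : 0 ≤ a) (hab : a ≤ b) (h : a / b ≤ c) :
    a ≤ c * b := by
  rcases ha.eq_or_lt with rfl | ha
  · exact mul_nonneg (by simpa using h) hab
  · exact (div_le_iff₀ (ha.trans_le hab)).mp h

section Cylinders

variable {X : Type*} {T : X → X} {α : Set (Set X)}

theorem cylinders_countable (hα : α.Countable) (n : ℕ) : (cylinders T α n).Countable := by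
  have := hα.to_subtype
  refine (countable_range fun a : Fin n → α => ⋂ j : Fin n, T^[j] ⁻¹' (a j : Set X)).mono ?_
  rintro c ⟨-, a, ha, rfl⟩
  exact ⟨fun j => ⟨a j, ha j⟩, rfl⟩

theorem cylinders_pairwise_disjoint (hdisj : α.PairwiseDisjoint id) (n : ℕ) :
    (cylinders T α n).Pairwise Disjoint := by
  rintro _ ⟨-, a, ha, rfl⟩ _ ⟨-, b, hb, rfl⟩ hne
  refine Set.disjoint_left.mpr fun x hxa hxb => hne ?_
  rw [show a = b from funext fun j => hdisj.elim (ha j) (hb j) (Set.not_disjoint_iff.mpr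
    ⟨T^[j] x, mem_iInter.mp hxa j, mem_iInter.mp hxb j⟩)]

theorem exists_mem_cylinders (hcover : ⋃₀ α = univ) (n : ℕ) (x : X) :
    ∃ c ∈ cylinders T α n, x ∈ c := by
  choose a ha hxa using fun j : Fin n => mem_sUnion.mp (hcover ▸ mem_univ (T^[j] x))
  have hx : x ∈ ⋂ j : Fin n, T^[j] ⁻¹' a j := mem_iInter.mpr hxa
  exact ⟨_, ⟨⟨x, hx⟩, a, ha, rfl⟩, hx⟩

theorem subset_of_mem_cylinders_of_le (hdisj : α.PairwiseDisjoint id) {k n : ℕ} (hkn : k ≤ n)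
    {u c : Set X} (hu : u ∈ cylinders T α k) (hc : c ∈ cylinders T α n)
    {x : X} (hxc : x ∈ c) (hxu : x ∈ u) : c ⊆ u := by
  obtain ⟨-, b, hb, rfl⟩ := hu
  obtain ⟨-, a, ha, rfl⟩ := hc
  intro y hy
  refine mem_iInter.mpr fun j => ?_
  let j' : Fin n := ⟨j, j.2.trans_le hkn⟩
  have hab : a j' = b j := hdisj.elim (ha j') (hb j) (Set.not_disjoint_iff.mpr
    ⟨T^[j] x, mem_iInter.mp hxc j', mem_iInter.mp hxu j⟩)
  exact hab ▸ mem_iInter.mp hy j'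

theorem cocycle_eq_of_mem_cylinders {G : Type*} [Monoid G] {ψ : X → G}
    (hψ : ∀ a ∈ α, ∀ x ∈ a, ∀ y ∈ a, ψ x = ψ y) {n : ℕ} {c : Set X}
    (hc : c ∈ cylinders T α n) {x y : X} (hx : x ∈ c) (hy : y ∈ c) :
    cocycle T ψ n x = cocycle T ψ n y := by
  obtain ⟨-, a, ha, rfl⟩ := hc
  suffices ∀ m ≤ n, cocycle T ψ m x = cocycle T ψ m y from this n le_rfl
  intro m
  induction m with
  | zero => intro _; rfl
  | succ m ih =>
    intro hm
    let j : Fin n := ⟨m, hm⟩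
    show ψ (T^[m] x) * cocycle T ψ m x = ψ (T^[m] y) * cocycle T ψ m y
    rw [hψ _ (ha j) _ (mem_iInter.mp hx j) _ (mem_iInter.mp hy j), ih (m.le_succ.trans hm)]

theorem sUnion_cylinders_subset (hcover : ⋃₀ α = univ) {n : ℕ} {s : Set X}
    (hs : ∀ c ∈ cylinders T α n, ∀ x ∈ c, x ∈ s → c ⊆ s) :
    ⋃₀ {c | c ∈ cylinders T α n ∧ c ⊆ s} = s := by
  refine (sUnion_subset fun c hc => hc.2).antisymm fun x hx => ?_
  obtain ⟨c, hc, hxc⟩ := exists_mem_cylinders (T := T) hcover n x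
  exact ⟨c, ⟨hc, hs c hc x hxc hx⟩, hxc⟩

end Cylinders

section Measure

variable {X : Type*} [MeasurableSpace X] {T : X → X} {α : Set (Set X)}

theorem measurableSet_of_mem_cylinders (hT : Measurable T) (hmeas : ∀ a ∈ α, MeasurableSet a)
    {n : ℕ} {c : Set X} (hc : c ∈ cylinders T α n) : MeasurableSet c := by
  obtain ⟨-, a, ha, rfl⟩ := hc
  exact .iInter fun j => (hmeas _ (ha j)).preimage (hT.iterate _)

theorem measure_sUnion_of_subset_cylinders (μ : Measure X) (hT : Measurable T)
    (hα : α.Countable) (hmeas : ∀ a ∈ α, MeasurableSet a) (hdisj : α.PairwiseDisjoint id)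
    {n : ℕ} {P : Set (Set X)} (hP : P ⊆ cylinders T α n) :
    μ (⋃₀ P) = ∑' c : P, μ c :=
  measure_sUnion ((cylinders_countable hα n).mono hP)
    ((cylinders_pairwise_disjoint hdisj n).mono hP)
    fun _ hc => measurableSet_of_mem_cylinders hT hmeas (hP hc)

/-- Every `k`-cylinder is a countable disjoint union of `m`-cylinders, `k ≤ m`. -/
theorem measureReal_le_of_forall_cylinders {ν ν' : Measure X} [IsFiniteMeasure ν]
    [IsFiniteMeasure ν'] (hT : Measurable T) (hα : α.Countable)
    (hmeas : ∀ a ∈ α, MeasurableSet a) (hdisj : α.PairwiseDisjoint id) (hcover : ⋃₀ α = univ)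
    {k m : ℕ} (hkm : k ≤ m) {u : Set X} (hu : u ∈ cylinders T α k)
    (h : ∀ b ∈ cylinders T α m, ν.real b ≤ ν'.real b) : ν.real u ≤ ν'.real u := by
  have hP : {b | b ∈ cylinders T α m ∧ b ⊆ u} ⊆ cylinders T α m := fun _ hb => hb.1
  rw [measureReal_def, measureReal_def, ENNReal.toReal_le_toReal (by finiteness) (by finiteness),
    ← sUnion_cylinders_subset hcover fun c hc x hxc hxu =>
      subset_of_mem_cylinders_of_le hdisj hkm hu hc hxc hxu,
    measure_sUnion_of_subset_cylinders ν hT hα hmeas hdisj hP,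
    measure_sUnion_of_subset_cylinders ν' hT hα hmeas hdisj hP]
  exact ENNReal.tsum_le_tsum fun b => (ENNReal.toReal_le_toReal (by finiteness)
    (by finiteness)).mp (h b b.2.1)

theorem measureReal_inter_div_mem_of_forall_cylinders (μ : Measure X) [IsFiniteMeasure μ]
    (hT : Measurable T) (hα : α.Countable) (hmeas : ∀ a ∈ α, MeasurableSet a)
    (hdisj : α.PairwiseDisjoint id) (hcover : ⋃₀ α = univ) {k m : ℕ} (hkm : k ≤ m)
    {u : Set X} (hu : u ∈ cylinders T α k) {S : Set X} {ε : ℝ} (hε : 0 < ε)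
    (hS : 0 < μ.real S)
    (h : ∀ b ∈ cylinders T α m, μ.real S / (1 + ε) ≤ μ.real (b ∩ S) / μ.real b ∧
      μ.real (b ∩ S) / μ.real b ≤ (1 + ε) * μ.real S) :
    μ.real u / (1 + ε) ≤ μ.real (u ∩ S) / μ.real S ∧
      μ.real (u ∩ S) / μ.real S ≤ (1 + ε) * μ.real u := by
  have hmeas_u := measurableSet_of_mem_cylinders hT hmeas hu
  have hc₁ : 0 ≤ μ.real S / (1 + ε) := by positivity
  have hc₂ : 0 ≤ (1 + ε) * μ.real S := by positivity
  have hlower : μ.real S / (1 + ε) * μ.real u ≤ μ.real (u ∩ S) := by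
    simpa [hmeas_u, hc₁] using measureReal_le_of_forall_cylinders
      (ν := (μ.real S / (1 + ε)).toNNReal • μ) (ν' := μ.restrict S)
      hT hα hmeas hdisj hcover hkm hu fun b hb => by
        simpa [measurableSet_of_mem_cylinders hT hmeas hb, hc₁] using
          mul_le_of_le_div₀ measureReal_nonneg measureReal_nonneg (h b hb).1
  have hupper : μ.real (u ∩ S) ≤ (1 + ε) * μ.real S * μ.real u := by
    simpa [hmeas_u, hc₂] using measureReal_le_of_forall_cylinders
      (ν := μ.restrict S) (ν' := ((1 + ε) * μ.real S).toNNReal • μ)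
      hT hα hmeas hdisj hcover hkm hu fun b hb => by
        simpa [measurableSet_of_mem_cylinders hT hmeas hb, hc₂] using
          le_mul_of_div_le_of_le measureReal_nonneg (measureReal_mono inter_subset_left)
            (h b hb).2
  rw [le_div_iff₀ hS, div_le_iff₀ hS]
  exact ⟨le_of_eq_of_le (by ring) hlower, hupper.trans_eq (by ring)⟩

theorem mng_eq_measureReal_inter_div (μ : Measure X) (hT : Measurable T) (hα : α.Countable)
    (hmeas : ∀ a ∈ α, MeasurableSet a) (hdisj : α.PairwiseDisjoint id) (hcover : ⋃₀ α = univ)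
    {G : Type*} [Group G] {ψ : X → G} (hψ : ∀ a ∈ α, ∀ x ∈ a, ∀ y ∈ a, ψ x = ψ y) (g : G)
    {k n : ℕ} (hkn : k ≤ n) {u : Set X} (hu : u ∈ cylinders T α k) :
    mng μ T α ψ g n u =
      μ.real (u ∩ {x | cocycle T ψ n x = g}) / μ.real {x | cocycle T ψ n x = g} := by
  set S := {x | cocycle T ψ n x = g}
  have hP : {a | a ∈ cylinders T α n ∧ a ⊆ u ∧ ∀ x ∈ a, cocycle T ψ n x = g} =
      {c | c ∈ cylinders T α n ∧ c ⊆ u ∩ S} := by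
    ext a
    simp only [subset_inter_iff]
    rfl
  have hsum : (∑' a : {a : Set X // a ∈ cylinders T α n ∧ a ⊆ u ∧ ∀ x ∈ a, cocycle T ψ n x = g},
      μ a) = μ (u ∩ S) := by
    refine (measure_sUnion_of_subset_cylinders μ hT hα hmeas hdisj
      (P := {a | a ∈ cylinders T α n ∧ a ⊆ u ∧ ∀ x ∈ a, cocycle T ψ n x = g})
      fun _ ha => ha.1).symm.trans ?_
    rw [hP, sUnion_cylinders_subset (s := u ∩ S) hcover fun c hc x hxc hx => subset_inter
      (subset_of_mem_cylinders_of_le hdisj hkn hu hc hxc hx.1)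
      fun y hy => (cocycle_eq_of_mem_cylinders hψ hc hy hxc).trans hx.2]
  rw [mng, hsum, measureReal_def, measureReal_def]

end Measure

theorem mng_tendsto_discrete_general
    {X : Type*} [MetricSpace X] [MeasurableSpace X]
    {G : Type*} [Group G]
    {μ : Measure X} {T : X → X} {α : Set (Set X)} {φ : X → ℝ}
    (hGM : IsGibbsMarkov μ T α φ)
    {ψ : X → G}
    (hψconst : ∀ a ∈ α, ∀ x ∈ a, ∀ y ∈ a, ψ x = ψ y)
    (g : G) (hD : CondD μ T α ψ g)
    (hgpos : ∃ N : ℕ, ∀ n ≥ N, 0 < μ {x | cocycle T ψ n x = g}) :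
    ∀ k : ℕ, ∀ u ∈ cylinders T α k,
      Tendsto (fun n : ℕ => mng μ T α ψ g n u) atTop (𝓝 (μ u).toReal) := by
  have := hGM.prob
  obtain ⟨N, hN⟩ := hgpos
  intro k u hu
  refine tendsto_of_forall_eventually_div_le_le_mul ENNReal.toReal_nonneg fun ε hε => ?_
  obtain ⟨n₁, hkn₁, hD⟩ := hD ε hε k
  filter_upwards [eventually_ge_atTop n₁, eventually_ge_atTop N] with n hn₁ hnN
  obtain ⟨n', ⟨hkn', -⟩, hD⟩ := hD n hn₁
  rw [mng_eq_measureReal_inter_div μ hGM.measurable_T hGM.countable hGM.measurableSet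
    hGM.pairwiseDisjoint hGM.cover hψconst g (hkn₁.le.trans hn₁) hu]
  exact measureReal_inter_div_mem_of_forall_cylinders μ hGM.measurable_T hGM.countable
    hGM.measurableSet hGM.pairwiseDisjoint hGM.cover hkn' hu hε
    (ENNReal.toReal_pos (hN n hnN).ne' (by finiteness)) hD

/-- Under condition (D) at `g` and eventual positivity of `μ^n(g)`,
the measures `m_n^g` of any cylinder `u` converge to `μ(u)`. -/
theorem mng_tendsto_discrete
    {X : Type*} [MetricSpace X] [MeasurableSpace X] [BorelSpace X]
    {G : Type*} [Group G] [Countable G]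
    {μ : Measure X} {T : X → X} {α : Set (Set X)} {φ : X → ℝ}
    (hGM : IsGibbsMarkov μ T α φ)
    {ψ : X → G}
    (hψconst : ∀ a ∈ α, ∀ x ∈ a, ∀ y ∈ a, ψ x = ψ y)
    (g : G) (hD : CondD μ T α ψ g)
    (hgpos : ∃ N : ℕ, ∀ n ≥ N, 0 < μ {x | cocycle T ψ n x = g}) :
    ∀ k : ℕ, ∀ u ∈ cylinders T α k,
      Tendsto (fun n : ℕ => mng μ T α ψ g n u) atTop (𝓝 (μ u).toReal) :=
  mng_tendsto_discrete_general hGM hψconst g hD hgpos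
end
end

section
/- Let (X,μ,T,α) be a Gibbs–Markov map with full branches, G a countable discrete group with identity e, and ψ:X→G constant on each element of α. Write μ^n(e)=μ({x∈X : ψ_n(x)=e}). Then there exists D>0 such that μ^{n+m}(e) ≥ D·μ^n(e)·μ^m(e) for all n,m∈ℕ. -/
open MeasureTheory Filter Topology Set
open scoped ENNReal

noncomputable section

section Words

variable {X : Type*} {T : X → X} {α : Set (Set X)}

def wordCylinder (T : X → X) (α : Set (Set X)) {n : ℕ} (w : Fin n → α) : Set X :=
  ⋂ j : Fin n, T^[j] ⁻¹' w j

theorem mem_wordCylinder {n : ℕ} {w : Fin n → α} {x : X} :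
    x ∈ wordCylinder T α w ↔ ∀ j : Fin n, T^[j] x ∈ (w j : Set X) := by
  simp [wordCylinder]

theorem wordCylinder_append {n m : ℕ} (v : Fin n → α) (w : Fin m → α) :
    wordCylinder T α (Fin.append v w) = wordCylinder T α v ∩ T^[n] ⁻¹' wordCylinder T α w := by
  ext x
  simp only [mem_inter_iff, mem_preimage, mem_wordCylinder, Fin.forall_fin_add,
    Fin.append_left, Fin.append_right, Fin.val_castAdd, Fin.val_natAdd, add_comm n,
    Function.iterate_add_apply]

theorem wordCylinder_nonempty [Nonempty X] (hsurj : ∀ a ∈ α, SurjOn T a univ) :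
    ∀ {n : ℕ} (w : Fin n → α), (wordCylinder T α w).Nonempty
  | 0, _ => by simp [wordCylinder]
  | n + 1, w => by
    obtain ⟨y, hy⟩ := wordCylinder_nonempty hsurj (Fin.tail w)
    obtain ⟨x, hx, rfl⟩ := hsurj _ (w 0).2 (mem_univ y)
    refine ⟨x, mem_wordCylinder.2 (Fin.cases hx fun j => ?_)⟩
    simpa [Fin.tail, Function.iterate_succ_apply] using mem_wordCylinder.1 hy j

theorem wordCylinder_mem_cylinders [Nonempty X] (hsurj : ∀ a ∈ α, SurjOn T a univ) {n : ℕ}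
    (w : Fin n → α) : wordCylinder T α w ∈ cylinders T α n :=
  ⟨wordCylinder_nonempty hsurj w, fun j => w j, fun j => (w j).2, rfl⟩

theorem disjoint_wordCylinder (hα : α.PairwiseDisjoint id) {n : ℕ} {v w : Fin n → α}
    (hvw : v ≠ w) : Disjoint (wordCylinder T α v) (wordCylinder T α w) := by
  obtain ⟨j, hj⟩ := Function.ne_iff.1 hvw
  have hdisj : Disjoint (v j : Set X) (w j) := hα (v j).2 (w j).2 (Subtype.coe_ne_coe.2 hj)
  exact (hdisj.preimage T^[j]).mono (iInter_subset _ j) (iInter_subset _ j)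

theorem measurableSet_wordCylinder [MeasurableSpace X] (hT : Measurable T)
    (hα : ∀ a ∈ α, MeasurableSet a) {n : ℕ} (w : Fin n → α) :
    MeasurableSet (wordCylinder T α w) :=
  .iInter fun j => hT.iterate j (hα _ (w j).2)

theorem exists_mem_wordCylinder (hcover : ⋃₀ α = univ) (n : ℕ) (x : X) :
    ∃ w : Fin n → α, x ∈ wordCylinder T α w := by
  have hx : ∀ j : Fin n, ∃ a : α, T^[j] x ∈ (a : Set X) := fun j => by
    obtain ⟨a, ha, hxa⟩ := mem_sUnion.1 (hcover ▸ mem_univ (T^[j] x))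
    exact ⟨⟨a, ha⟩, hxa⟩
  choose w hw using hx
  exact ⟨w, mem_wordCylinder.2 hw⟩

end Words

section Cocycle

variable {X G : Type*} [Monoid G] {T : X → X} {ψ : X → G} {α : Set (Set X)}

theorem cocycle_add (n m : ℕ) (x : X) :
    cocycle T ψ (n + m) x = cocycle T ψ m (T^[n] x) * cocycle T ψ n x := by
  induction m with
  | zero => simp [cocycle]
  | succ m ih => rw [← add_assoc, cocycle, ih, cocycle, mul_assoc, add_comm n m,
      Function.iterate_add_apply]

theorem birkhoff_add (φ : X → ℝ) (n m : ℕ) (x : X) :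
    birkhoff T φ (n + m) x = birkhoff T φ n x + birkhoff T φ m (T^[n] x) := by
  rw [birkhoff, birkhoff, birkhoff, Finset.sum_range_add]
  simp only [add_comm n, Function.iterate_add_apply]

theorem cocycle_eq_of_mem_wordCylinder (hψ : ∀ a ∈ α, ∀ x ∈ a, ∀ y ∈ a, ψ x = ψ y) :
    ∀ {n : ℕ} (w : Fin n → α) {x y : X}, x ∈ wordCylinder T α w → y ∈ wordCylinder T α w →
      cocycle T ψ n x = cocycle T ψ n y
  | 0, _, _, _, _, _ => rfl
  | n + 1, w, x, y, hx, hy => by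
    rw [mem_wordCylinder, Fin.forall_iff_castSucc, Fin.val_last] at hx hy
    have hinit := cocycle_eq_of_mem_wordCylinder hψ (Fin.init w)
      (mem_wordCylinder.2 hx.2) (mem_wordCylinder.2 hy.2)
    rw [cocycle, cocycle, hinit, hψ _ (w (Fin.last n)).2 _ hx.1 _ hy.1]

theorem inter_preimage_setOf_cocycle_eq_subset (n m : ℕ) (g h : G) :
    {x | cocycle T ψ n x = g} ∩ T^[n] ⁻¹' {x | cocycle T ψ m x = h} ⊆
      {x | cocycle T ψ (n + m) x = h * g} := fun x hx => by
  rw [mem_ofPred_eq, cocycle_add, hx.1, hx.2.out]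

theorem exists_biUnion_wordCylinder_eq_setOf_cocycle_eq (hcover : ⋃₀ α = univ)
    (hψ : ∀ a ∈ α, ∀ x ∈ a, ∀ y ∈ a, ψ x = ψ y) (n : ℕ) (g : G) :
    ∃ S : Set (Fin n → α), {x | cocycle T ψ n x = g} = ⋃ w ∈ S, wordCylinder T α w := by
  refine ⟨{w | wordCylinder T α w ⊆ {x | cocycle T ψ n x = g}}, subset_antisymm ?_ ?_⟩
  · intro x hx
    obtain ⟨w, hxw⟩ := exists_mem_wordCylinder hcover n x
    refine mem_biUnion (fun y hyw => ?_) hxw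
    exact (cocycle_eq_of_mem_wordCylinder hψ w hyw hxw).trans hx
  · exact iUnion₂_subset fun w hw => hw

end Cocycle

theorem measure_biUnion_mul_le_of_le {X ι : Type*} [MeasurableSpace X] {μ : Measure X}
    {s : Set ι} (hs : s.Countable) {A B : ι → Set X} (hB : s.PairwiseDisjoint B)
    (hBm : ∀ i ∈ s, MeasurableSet (B i)) {c K : ℝ≥0∞}
    (h : ∀ i ∈ s, μ (A i) * c ≤ K * μ (B i)) :
    μ (⋃ i ∈ s, A i) * c ≤ K * μ (⋃ i ∈ s, B i) :=
  calc μ (⋃ i ∈ s, A i) * c ≤ (∑' i : s, μ (A i)) * c := by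
        gcongr; exact measure_biUnion_le μ hs A
    _ = ∑' i : s, μ (A i) * c := ENNReal.tsum_mul_right.symm
    _ ≤ ∑' i : s, K * μ (B i) := ENNReal.tsum_le_tsum fun i => h i i.2
    _ = K * μ (⋃ i ∈ s, B i) := by rw [ENNReal.tsum_mul_left, measure_biUnion hs hB hBm]

def GibbsBound {X : Type*} [MeasurableSpace X] (μ : Measure X) (T : X → X) (α : Set (Set X))
    (φ : X → ℝ) (C : ℝ) : Prop :=
  ∀ {n : ℕ} (w : Fin n → α), ∀ x ∈ wordCylinder T α w,
    (μ (wordCylinder T α w)).toReal ≤ C * Real.exp (birkhoff T φ n x) ∧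
      Real.exp (birkhoff T φ n x) ≤ C * (μ (wordCylinder T α w)).toReal

namespace IsGibbsMarkov

variable {X : Type*} [MetricSpace X] [MeasurableSpace X] {μ : Measure X} {T : X → X}
  {α : Set (Set X)} {φ : X → ℝ}

theorem surjOn (hGM : IsGibbsMarkov μ T α φ) : ∀ a ∈ α, SurjOn T a univ :=
  fun a ha => (hGM.fullBranches a ha).surjOn

/-- Enlarging the Gibbs constant to `C ≥ 1` makes the bound hold also for the empty word. -/
theorem exists_gibbsBound (hGM : IsGibbsMarkov μ T α φ) :
    ∃ C ≥ (1 : ℝ), GibbsBound μ T α φ C := by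
  have := hGM.prob
  have := nonempty_of_isProbabilityMeasure μ
  obtain ⟨C₀, hC₀, hgibbs⟩ := hGM.gibbs
  refine ⟨max C₀ 1, le_max_right _ _, ?_⟩
  rintro (_ | n) w x hx
  · simp [wordCylinder, birkhoff]
  · obtain ⟨hlower, hupper⟩ := hgibbs n _ (wordCylinder_mem_cylinders hGM.surjOn w) x hx
    rw [div_le_iff₀ hC₀, mul_comm] at hlower
    constructor
    · exact hlower.trans (by gcongr; exact le_max_left _ _)
    · exact hupper.trans (by gcongr; exact le_max_left _ _)

theorem measure_wordCylinder_mul_le (hGM : IsGibbsMarkov μ T α φ) {C : ℝ} (hC : 0 ≤ C)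
    (hgibbs : GibbsBound μ T α φ C)
    {n m : ℕ} (v : Fin n → α) (w : Fin m → α) :
    μ (wordCylinder T α v) * μ (wordCylinder T α w) ≤
      ENNReal.ofReal (C ^ 3) * μ (wordCylinder T α v ∩ T^[n] ⁻¹' wordCylinder T α w) := by
  have := hGM.prob
  have := nonempty_of_isProbabilityMeasure μ
  obtain ⟨x, hx⟩ := wordCylinder_nonempty hGM.surjOn (Fin.append v w)
  have hvw := (hgibbs _ x hx).2
  rw [wordCylinder_append] at hx hvw
  have key : (μ (wordCylinder T α v)).toReal * (μ (wordCylinder T α w)).toReal ≤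
      C ^ 3 * (μ (wordCylinder T α v ∩ T^[n] ⁻¹' wordCylinder T α w)).toReal :=
    calc _ ≤ (C * Real.exp (birkhoff T φ n x)) * (C * Real.exp (birkhoff T φ m (T^[n] x))) :=
          mul_le_mul (hgibbs v x hx.1).1 (hgibbs w _ hx.2).1 ENNReal.toReal_nonneg
            (by positivity)
      _ = C ^ 2 * Real.exp (birkhoff T φ (n + m) x) := by
          rw [birkhoff_add, Real.exp_add]; ring
      _ ≤ C ^ 2 * (C * (μ (wordCylinder T α v ∩ T^[n] ⁻¹' wordCylinder T α w)).toReal) := by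
          gcongr
      _ = _ := by ring
  calc μ (wordCylinder T α v) * μ (wordCylinder T α w)
      = ENNReal.ofReal ((μ (wordCylinder T α v)).toReal * (μ (wordCylinder T α w)).toReal) := by
        rw [ENNReal.ofReal_mul ENNReal.toReal_nonneg, ENNReal.ofReal_toReal (measure_ne_top _ _),
          ENNReal.ofReal_toReal (measure_ne_top _ _)]
    _ ≤ _ := ENNReal.ofReal_le_ofReal key
    _ = _ := by rw [ENNReal.ofReal_mul (by positivity), ENNReal.ofReal_toReal (measure_ne_top _ _)]

theorem exists_measure_mul_le_measure_inter_preimage (hGM : IsGibbsMarkov μ T α φ) :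
    ∃ C > (0 : ℝ), ∀ {n m : ℕ} (S : Set (Fin n → α)) (S' : Set (Fin m → α)),
      μ (⋃ v ∈ S, wordCylinder T α v) * μ (⋃ w ∈ S', wordCylinder T α w) ≤
        ENNReal.ofReal C *
          μ ((⋃ v ∈ S, wordCylinder T α v) ∩ T^[n] ⁻¹' ⋃ w ∈ S', wordCylinder T α w) := by
  have := hGM.countable.to_subtype
  obtain ⟨C, hC, hgibbs⟩ := hGM.exists_gibbsBound
  refine ⟨C ^ 3, by positivity, fun {n m} S S' => ?_⟩
  have hmeas {k : ℕ} (w : Fin k → α) :=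
    measurableSet_wordCylinder hGM.measurable_T hGM.measurableSet w
  rw [iUnion₂_inter]
  refine measure_biUnion_mul_le_of_le S.to_countable
    (fun v _ v' _ hv => (disjoint_wordCylinder hGM.pairwiseDisjoint hv).mono
      inter_subset_left inter_subset_left)
    (fun v _ => (hmeas v).inter (hGM.measurable_T.iterate n
      (.biUnion S'.to_countable fun w _ => hmeas w))) fun v _ => ?_
  rw [mul_comm, preimage_iUnion₂, inter_iUnion₂]
  refine measure_biUnion_mul_le_of_le S'.to_countable
    (fun w _ w' _ hw => ((disjoint_wordCylinder hGM.pairwiseDisjoint hw).preimage _).mono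
      inter_subset_right inter_subset_right)
    (fun w _ => (hmeas v).inter (hGM.measurable_T.iterate n (hmeas w))) fun w _ => ?_
  rw [mul_comm]
  exact hGM.measure_wordCylinder_mul_le (by positivity) hgibbs v w

end IsGibbsMarkov

theorem mun_supermultiplicative_general
    {X : Type*} [MetricSpace X] [MeasurableSpace X]
    {G : Type*} [Group G]
    {μ : Measure X} {T : X → X} {α : Set (Set X)} {φ : X → ℝ}
    (hGM : IsGibbsMarkov μ T α φ)
    {ψ : X → G}
    (hψconst : ∀ a ∈ α, ∀ x ∈ a, ∀ y ∈ a, ψ x = ψ y) :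
    ∃ D > (0 : ℝ), ∀ n m : ℕ,
      D * (μ {x | cocycle T ψ n x = (1 : G)}).toReal *
          (μ {x | cocycle T ψ m x = (1 : G)}).toReal ≤
        (μ {x | cocycle T ψ (n + m) x = (1 : G)}).toReal := by
  have := hGM.prob
  obtain ⟨C, hC, hmul⟩ := hGM.exists_measure_mul_le_measure_inter_preimage
  refine ⟨C⁻¹, inv_pos.2 hC, fun n m => ?_⟩
  obtain ⟨S, hS⟩ := exists_biUnion_wordCylinder_eq_setOf_cocycle_eq hGM.cover hψconst n (1 : G)
  obtain ⟨S', hS'⟩ := exists_biUnion_wordCylinder_eq_setOf_cocycle_eq hGM.cover hψconst m (1 : G)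
  have hle : μ {x | cocycle T ψ n x = 1} * μ {x | cocycle T ψ m x = 1} ≤
      ENNReal.ofReal C * μ {x | cocycle T ψ (n + m) x = 1} :=
    calc _ ≤ ENNReal.ofReal C *
          μ ({x | cocycle T ψ n x = 1} ∩ T^[n] ⁻¹' {x | cocycle T ψ m x = 1}) :=
          hS ▸ hS' ▸ hmul S S'
      _ ≤ _ := by
          gcongr; simpa using inter_preimage_setOf_cocycle_eq_subset (T := T) (ψ := ψ) n m 1 1
  have hreal := ENNReal.toReal_mono (ENNReal.mul_ne_top ENNReal.ofReal_ne_top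
    (measure_ne_top _ _)) hle
  rw [ENNReal.toReal_mul, ENNReal.toReal_mul, ENNReal.toReal_ofReal hC.le] at hreal
  rwa [mul_assoc, inv_mul_le_iff₀ hC]

/-- Almost supermultiplicativity of `μ^n(e) = μ({ψ_n = e})`:
there is `D > 0` with `μ^{n+m}(e) ≥ D·μ^n(e)·μ^m(e)` for all `n, m`. -/
theorem mun_supermultiplicative
    {X : Type*} [MetricSpace X] [MeasurableSpace X] [BorelSpace X]
    {G : Type*} [Group G] [Countable G]
    {μ : Measure X} {T : X → X} {α : Set (Set X)} {φ : X → ℝ}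
    (hGM : IsGibbsMarkov μ T α φ)
    {ψ : X → G}
    (hψconst : ∀ a ∈ α, ∀ x ∈ a, ∀ y ∈ a, ψ x = ψ y) :
    ∃ D > (0 : ℝ), ∀ n m : ℕ,
      D * (μ {x | cocycle T ψ n x = (1 : G)}).toReal *
          (μ {x | cocycle T ψ m x = (1 : G)}).toReal ≤
        (μ {x | cocycle T ψ (n + m) x = (1 : G)}).toReal :=
  mun_supermultiplicative_general hGM hψconst
end
end
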